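/- Let Σ be a d×d Hermitian matrix and Z an n×d complex matrix. Suppose Z Z* has at least r eigenvalues ≤ b₁, and Σ has at least s eigenvalues ≤ b₂ with b₂ > 0 and b₁ ≥ 0. Then Z Σ Z* has at least r + s − d eigenvalues that are ≤ b₁·b₂. -/

import Mathlib

/-! The number of eigenvalues `≤ c` of a Hermitian matrix is the largest dimension of a subspace on
which its quadratic form is at most `c ‖x‖²` (the counting form of Courant–Fischer). Take such
subspaces `V₁` for `Z Z*` and `b₁`, and `V₂` for `Σ` and `b₂`. The subspace `V₁ ∩ (Z*)⁻¹ V₂` has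
dimension at least `dim V₁ + dim V₂ - d`, and on it
`⟪Z Σ Z* x, x⟫ = ⟪Σ (Z* x), Z* x⟫ ≤ b₂ ‖Z* x‖² ≤ b₁ b₂ ‖x‖²`. -/

open Matrix Finset

open scoped InnerProductSpace

namespace OrthonormalBasis

variable {𝕜 E ι : Type*} [RCLike 𝕜] [NormedAddCommGroup E] [InnerProductSpace 𝕜 E] [Fintype ι]
  (b : OrthonormalBasis ι 𝕜 E)

lemma inner_eq_zero_of_mem_span_image {s : Set ι} {x : E} (hx : x ∈ Submodule.span 𝕜 (b '' s))
    {i : ι} (hi : i ∉ s) : ⟪b i, x⟫_𝕜 = 0 := by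
  have hle : Submodule.span 𝕜 (b '' s) ≤ (𝕜 ∙ b i)ᗮ := by
    rw [Submodule.span_le]
    rintro _ ⟨j, hj, rfl⟩
    exact Submodule.mem_orthogonal_singleton_iff_inner_right.2
      (b.inner_eq_zero fun h => hi (h ▸ hj))
  exact Submodule.mem_orthogonal_singleton_iff_inner_right.1 (hle hx)

lemma finrank_span_image (s : Finset ι) :
    Module.finrank 𝕜 (Submodule.span 𝕜 (b '' s)) = s.card := by
  rw [Set.image_eq_range]
  exact (finrank_span_eq_card (b.orthonormal.linearIndependent.comp _ Subtype.val_injective)).trans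
    (by simp)

variable {b} {T : E →ₗ[𝕜] E} {μ : ι → ℝ}

lemma re_inner_apply_self_eq_sum (hT : ∀ i, T (b i) = (μ i : 𝕜) • b i) (x : E) :
    RCLike.re ⟪T x, x⟫_𝕜 = ∑ i, μ i * ‖⟪b i, x⟫_𝕜‖ ^ 2 := by
  have hTx : T x = ∑ i, ((μ i : 𝕜) * ⟪b i, x⟫_𝕜) • b i := by
    conv_lhs => rw [← b.sum_repr' x]
    simp only [map_sum, map_smul, hT, smul_smul, mul_comm]
  rw [hTx, sum_inner, map_sum]
  refine Finset.sum_congr rfl fun i _ => ?_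
  rw [inner_smul_left, map_mul (starRingEnd 𝕜), RCLike.conj_ofReal, mul_assoc, RCLike.conj_mul,
    ← RCLike.ofReal_pow, ← RCLike.ofReal_mul, RCLike.ofReal_re]

lemma re_inner_apply_self_sub_mul_norm_sq_eq_sum (hT : ∀ i, T (b i) = (μ i : 𝕜) • b i) (c : ℝ)
    (x : E) :
    RCLike.re ⟪T x, x⟫_𝕜 - c * ‖x‖ ^ 2 = ∑ i, (μ i - c) * ‖⟪b i, x⟫_𝕜‖ ^ 2 := by
  simp only [re_inner_apply_self_eq_sum hT, ← b.sum_sq_norm_inner_right x, Finset.mul_sum,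
    ← Finset.sum_sub_distrib, sub_mul]

theorem finrank_le_card_of_re_inner_le (hT : ∀ i, T (b i) = (μ i : 𝕜) • b i) {c : ℝ}
    {V : Submodule 𝕜 E} (hV : ∀ x ∈ V, RCLike.re ⟪T x, x⟫_𝕜 ≤ c * ‖x‖ ^ 2) :
    Module.finrank 𝕜 V ≤ #{i | μ i ≤ c} := by
  have := Module.Finite.of_basis b.toBasis
  let W := Submodule.span 𝕜 (b '' ↑(univ.filter fun i => c < μ i))
  -- On `W` the form exceeds `c * ‖x‖ ^ 2` strictly away from `0`, so `W` meets `V` trivially.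
  have hdisj : Disjoint V W := by
    refine Submodule.disjoint_def.2 fun x hxV hxW => ?_
    have hterm (i : ι) : 0 ≤ (μ i - c) * ‖⟪b i, x⟫_𝕜‖ ^ 2 := by
      by_cases hi : c < μ i
      · exact mul_nonneg (sub_nonneg.2 hi.le) (sq_nonneg _)
      · simp [b.inner_eq_zero_of_mem_span_image hxW (by simpa using hi)]
    have hsum : ∑ i, (μ i - c) * ‖⟪b i, x⟫_𝕜‖ ^ 2 = 0 := by
      refine le_antisymm ?_ (Finset.sum_nonneg fun i _ => hterm i)
      rw [← re_inner_apply_self_sub_mul_norm_sq_eq_sum hT]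
      exact sub_nonpos.2 (hV x hxV)
    have hcoord (i : ι) : ⟪b i, x⟫_𝕜 = 0 := by
      by_cases hi : c < μ i
      · have := (Finset.sum_eq_zero_iff_of_nonneg fun i _ => hterm i).1 hsum i (mem_univ i)
        simpa [(sub_pos.2 hi).ne'] using this
      · exact b.inner_eq_zero_of_mem_span_image hxW (by simpa using hi)
    rw [← b.sum_repr' x]
    simp [hcoord]
  have hcard := Finset.card_filter_add_card_filter_not (s := univ) fun i => μ i ≤ c
  have hW : Module.finrank 𝕜 W = #{i | c < μ i} := b.finrank_span_image _
  have hdim := Submodule.finrank_add_finrank_le_of_disjoint hdisj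
  simp only [not_le, card_univ] at hcard
  rw [hW, Module.finrank_eq_card_basis b.toBasis] at hdim
  omega

theorem exists_finrank_eq_card_and_re_inner_le (hT : ∀ i, T (b i) = (μ i : 𝕜) • b i)
    (c : ℝ) :
    ∃ V : Submodule 𝕜 E, Module.finrank 𝕜 V = #{i | μ i ≤ c} ∧
      ∀ x ∈ V, RCLike.re ⟪T x, x⟫_𝕜 ≤ c * ‖x‖ ^ 2 := by
  refine ⟨Submodule.span 𝕜 (b '' ↑(univ.filter fun i => μ i ≤ c)), b.finrank_span_image _,
    fun x hx => sub_nonpos.1 ?_⟩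
  rw [re_inner_apply_self_sub_mul_norm_sq_eq_sum hT]
  refine Finset.sum_nonpos fun i _ => ?_
  by_cases hi : μ i ≤ c
  · exact mul_nonpos_of_nonpos_of_nonneg (sub_nonpos.2 hi) (sq_nonneg _)
  · simp [b.inner_eq_zero_of_mem_span_image hx (by simpa using hi)]

end OrthonormalBasis

namespace Submodule

variable {K V W : Type*} [DivisionRing K] [AddCommGroup V] [Module K V] [AddCommGroup W]
  [Module K W] [FiniteDimensional K V] [FiniteDimensional K W]

theorem finrank_add_finrank_le_finrank_comap_add (f : V →ₗ[K] W) (q : Submodule K W) :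
    Module.finrank K V + Module.finrank K q ≤
      Module.finrank K (q.comap f) + Module.finrank K W := by
  have hker : LinearMap.ker (q.mkQ ∘ₗ f) = q.comap f := by
    rw [LinearMap.ker_comp, ker_mkQ]
  have hrank := LinearMap.finrank_range_add_finrank_ker (q.mkQ ∘ₗ f)
  have hquot := q.finrank_quotient_add_finrank
  have hrange := finrank_le (LinearMap.range (q.mkQ ∘ₗ f))
  rw [hker] at hrank
  omega

theorem finrank_add_finrank_le_finrank_inf_comap_add (f : V →ₗ[K] W) (p : Submodule K V)
    (q : Submodule K W) :
    Module.finrank K p + Module.finrank K q ≤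
      Module.finrank K ↥(p ⊓ q.comap f) + Module.finrank K W := by
  have hcomap := finrank_add_finrank_le_finrank_comap_add f q
  have hsup := finrank_sup_add_finrank_inf_eq p (q.comap f)
  have hsup_le := finrank_le (p ⊔ q.comap f)
  omega

end Submodule

theorem LinearMap.re_inner_adjoint_comp_comp_apply_le {𝕜 E F : Type*} [RCLike 𝕜]
    [NormedAddCommGroup E] [InnerProductSpace 𝕜 E] [FiniteDimensional 𝕜 E]
    [NormedAddCommGroup F] [InnerProductSpace 𝕜 F] [FiniteDimensional 𝕜 F]
    {L : E →ₗ[𝕜] F} {T : F →ₗ[𝕜] F} {b₁ b₂ : ℝ} (hb₂ : 0 ≤ b₂) {x : E}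
    (hL : RCLike.re ⟪(L.adjoint ∘ₗ L) x, x⟫_𝕜 ≤ b₁ * ‖x‖ ^ 2)
    (hT : RCLike.re ⟪T (L x), L x⟫_𝕜 ≤ b₂ * ‖L x‖ ^ 2) :
    RCLike.re ⟪(L.adjoint ∘ₗ T ∘ₗ L) x, x⟫_𝕜 ≤ b₁ * b₂ * ‖x‖ ^ 2 := by
  rw [comp_apply, adjoint_inner_left, inner_self_eq_norm_sq] at hL
  rw [comp_apply, adjoint_inner_left]
  calc RCLike.re ⟪T (L x), L x⟫_𝕜 ≤ b₂ * ‖L x‖ ^ 2 := hT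
    _ ≤ b₂ * (b₁ * ‖x‖ ^ 2) := mul_le_mul_of_nonneg_left hL hb₂
    _ = b₁ * b₂ * ‖x‖ ^ 2 := by ring

lemma Matrix.IsHermitian.toEuclideanLin_eigenvectorBasis {𝕜 ι : Type*} [RCLike 𝕜] [Fintype ι]
    [DecidableEq ι] {A : Matrix ι ι 𝕜} (hA : A.IsHermitian) (j : ι) :
    toEuclideanLin A (hA.eigenvectorBasis j) = (hA.eigenvalues j : 𝕜) • hA.eigenvectorBasis j := by
  rw [toLpLin_apply, hA.mulVec_eigenvectorBasis, RCLike.real_smul_eq_coe_smul (K := 𝕜)]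
  rfl

theorem eigs_le_of_sandwich_general {n d : ℕ} {S : Matrix (Fin d) (Fin d) ℂ} (hS : S.IsHermitian)
    (Z : Matrix (Fin n) (Fin d) ℂ) {r s : ℕ} {b₁ b₂ : ℝ} (hb₂ : 0 < b₂)
    (hr : r ≤ (Finset.univ.filter fun i =>
      (Matrix.isHermitian_mul_conjTranspose_self Z).eigenvalues i ≤ b₁).card)
    (hs : s ≤ (Finset.univ.filter fun i => hS.eigenvalues i ≤ b₂).card) :
    r + s - d ≤ (Finset.univ.filter fun i =>
      (Matrix.isHermitian_mul_mul_conjTranspose Z hS).eigenvalues i ≤ b₁ * b₂).card := by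
  let L := toEuclideanLin Zᴴ
  have hZZ : toEuclideanLin (Z * Zᴴ) = L.adjoint ∘ₗ L := by
    rw [← toEuclideanLin_conjTranspose_eq_adjoint, conjTranspose_conjTranspose, toLpLin_mul_same]
  have hZSZ : toEuclideanLin (Z * S * Zᴴ) = L.adjoint ∘ₗ toEuclideanLin S ∘ₗ L := by
    rw [← toEuclideanLin_conjTranspose_eq_adjoint, conjTranspose_conjTranspose, toLpLin_mul_same,
      toLpLin_mul_same, LinearMap.comp_assoc]
  obtain ⟨V₁, hV₁, hV₁_le⟩ := OrthonormalBasis.exists_finrank_eq_card_and_re_inner_le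
    (Matrix.isHermitian_mul_conjTranspose_self Z).toEuclideanLin_eigenvectorBasis b₁
  obtain ⟨V₂, hV₂, hV₂_le⟩ :=
    OrthonormalBasis.exists_finrank_eq_card_and_re_inner_le hS.toEuclideanLin_eigenvectorBasis b₂
  have hcount := OrthonormalBasis.finrank_le_card_of_re_inner_le
    (Matrix.isHermitian_mul_mul_conjTranspose Z hS).toEuclideanLin_eigenvectorBasis
    (V := V₁ ⊓ V₂.comap L) fun x hx => by
      rw [hZSZ]
      exact LinearMap.re_inner_adjoint_comp_comp_apply_le hb₂.le (hZZ ▸ hV₁_le x hx.1)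
        (hV₂_le _ hx.2)
  have hdim := Submodule.finrank_add_finrank_le_finrank_inf_comap_add L V₁ V₂
  rw [finrank_euclideanSpace_fin] at hdim
  omega

/-- If `Z Z*` has at least `r` eigenvalues `≤ b₁` (with `b₁ ≥ 0`) and the Hermitian matrix
`Σ` has at least `s` eigenvalues `≤ b₂` with `b₂ > 0`, then `Z Σ Z*` has at least
`r + s − d` eigenvalues `≤ b₁ b₂` (all eigenvalues counted with multiplicity). -/
theorem eigs_le_of_sandwich {n d : ℕ} {S : Matrix (Fin d) (Fin d) ℂ} (hS : S.IsHermitian)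
    (Z : Matrix (Fin n) (Fin d) ℂ) {r s : ℕ} {b₁ b₂ : ℝ} (hb₁ : 0 ≤ b₁) (hb₂ : 0 < b₂)
    (hr : r ≤ (Finset.univ.filter fun i =>
      (Matrix.isHermitian_mul_conjTranspose_self Z).eigenvalues i ≤ b₁).card)
    (hs : s ≤ (Finset.univ.filter fun i => hS.eigenvalues i ≤ b₂).card) :
    r + s - d ≤ (Finset.univ.filter fun i =>
      (Matrix.isHermitian_mul_mul_conjTranspose Z hS).eigenvalues i ≤ b₁ * b₂).card :=
  eigs_le_of_sandwich_general hS Z hb₂ hr hs
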